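/- If I ⊂ k[x_1,…,x_n] is a Borel fixed monomial ideal with all minimal generators of degree ≤ d, then every associated prime of Ŝ/B(I) has the form ( x_{i, c_i} : 1 ≤ i ≤ m ) for some m and some integers c_1 ≤ c_2 ≤ ⋯ ≤ c_m. -/

import Mathlib

/-!
For a Borel-fixed `I`, membership of monomials is monotone for dominance of partial sums:
if `x^u ∈ I` and `psum u ≤ psum b`, then `x^b ∈ I`, because raising a single partial sum by one
is a Borel move (or, at the last index, a multiplication by `x_n`).

Given a monomial `μ` outside `B(I)`, walk greedily through the rows of the `n × d` grid, leaving
row `i` at the first cell outside `supp μ` at or after the column reached in row `i - 1`. The exit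
cells `(i, c_i)` form a chain with `c_1 ≤ ⋯ ≤ c_m` that avoids `μ` and meets the box of every
minimal generator: a generator missing all of them would be dominated by the staircase itself,
which therefore lies in `I`, so that the box of one of its prefixes, a minimal generator, would
divide `μ`. Hence `B(I)` is the intersection of the finitely many chain primes containing it, and
an associated prime of a quotient by a finite intersection of primes is one of those primes.
-/

open MvPolynomial CategoryTheory

namespace Pol


/-- Total degree of an exponent vector. -/
def degE {σ : Type} (a : σ →₀ ℕ) : ℕ := a.sum fun _ e => e

/-- `I` is a monomial ideal. -/
def IsMonomialIdeal {σ k : Type} [CommRing k] (I : Ideal (MvPolynomial σ k)) : Prop :=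
  ∃ A : Set (σ →₀ ℕ), I = Ideal.span ((fun a => (monomial a 1 : MvPolynomial σ k)) '' A)

/-- `I` is a squarefree monomial ideal. -/
def IsSquarefreeMonomialIdeal {σ k : Type} [CommRing k] (I : Ideal (MvPolynomial σ k)) : Prop :=
  ∃ A : Set (σ →₀ ℕ), (∀ a ∈ A, ∀ i, a i ≤ 1) ∧
    I = Ideal.span ((fun a => (monomial a 1 : MvPolynomial σ k)) '' A)

/-- Borel fixed (strongly stable) exchange property: `m ∈ I`, `x_i ∣ m`, `j < i`
implies `(x_j/x_i)·m ∈ I`. -/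
def IsBorelFixed {n : ℕ} {k : Type} [CommRing k] (I : Ideal (MvPolynomial (Fin n) k)) : Prop :=
  ∀ a : Fin n →₀ ℕ, (monomial a 1 : MvPolynomial (Fin n) k) ∈ I →
    ∀ i j : Fin n, j < i → a i ≠ 0 →
      (monomial (a + Finsupp.single j 1 - Finsupp.single i 1) 1 : MvPolynomial (Fin n) k) ∈ I

/-- `x^a` is a minimal generator of the monomial ideal `I`. -/
def IsMinGen {σ k : Type} [CommRing k] (I : Ideal (MvPolynomial σ k)) (a : σ →₀ ℕ) : Prop :=
  (monomial a 1 : MvPolynomial σ k) ∈ I ∧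
    ∀ i : σ, a i ≠ 0 → (monomial (a - Finsupp.single i 1) 1 : MvPolynomial σ k) ∉ I

/-- partial sum `b_i = a_1 + ⋯ + a_i` (cutoff `i : ℕ`, counting the first `i` variables). -/
def psum {n : ℕ} (a : Fin n →₀ ℕ) (i : ℕ) : ℕ :=
  ∑ j ∈ Finset.univ.filter (fun j : Fin n => (j : ℕ) < i), a j

/-- The exponent vector of `B(x^a)`: the variables `x_{i,j}` with
`b_{i-1}+1 ≤ j ≤ b_i` (in 0-indexed form `b_{i-1} ≤ j < b_i`). -/
noncomputable def boxExp {n : ℕ} (d : ℕ) (a : Fin n →₀ ℕ) : (Fin n × Fin d) →₀ ℕ :=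
  ∑ p ∈ Finset.univ.filter
      (fun p : Fin n × Fin d => psum a (p.1 : ℕ) ≤ (p.2 : ℕ) ∧ (p.2 : ℕ) < psum a ((p.1 : ℕ) + 1)),
    Finsupp.single p 1

/-- The exponent vector of the standard polarization `pol(x^a) = ∏_i x_{i,1} ⋯ x_{i,a_i}`. -/
noncomputable def polExp {n : ℕ} (d : ℕ) (a : Fin n →₀ ℕ) : (Fin n × Fin d) →₀ ℕ :=
  ∑ p ∈ Finset.univ.filter (fun p : Fin n × Fin d => (p.2 : ℕ) < a p.1), Finsupp.single p 1

/-- `B(I)`, generated by `B(m)` for minimal generators `m` of `I`. -/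
noncomputable def boxIdeal {n : ℕ} {k : Type} [CommRing k] (d : ℕ) (I : Ideal (MvPolynomial (Fin n) k)) :
    Ideal (MvPolynomial (Fin n × Fin d) k) :=
  Ideal.span {q | ∃ a : Fin n →₀ ℕ, IsMinGen I a ∧ q = monomial (boxExp d a) 1}

/-- The sequence `Θ = (x_{i,1} - x_{i,j})_{1 ≤ i ≤ n, 2 ≤ j ≤ d}` (0-indexed: `j ≥ 1`). -/
noncomputable def thetaList (n d : ℕ) (k : Type) [CommRing k] : List (MvPolynomial (Fin n × Fin d) k) :=
  (List.finRange n).flatMap fun i =>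
    ((List.finRange d).drop 1).map fun (j : Fin d) =>
      X (i, (⟨0, Nat.lt_of_le_of_lt (Nat.zero_le j.val) j.isLt⟩ : Fin d)) - X (i, j)

/-- The depolarization map `φ : Ŝ → S`, `x_{i,j} ↦ x_i`. -/
noncomputable def phi (n d : ℕ) (k : Type) [CommRing k] :
    MvPolynomial (Fin n × Fin d) k →ₐ[k] MvPolynomial (Fin n) k :=
  rename Prod.fst

/-- `Ext^i_R(M, R)` as an `R`-module. -/
noncomputable def ExtMod (R : Type) [CommRing R] (M : Type) [AddCommGroup M] [Module R M]
    (i : ℕ) : ModuleCat R :=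
  ((Ext R (ModuleCat R) i).obj (Opposite.op (ModuleCat.of R M))).obj (ModuleCat.of R R)

/-- The depth of `M` with respect to the ideal `J`: the supremum of lengths of
weakly regular sequences on `M` contained in `J`. -/
noncomputable def moduleDepth {R : Type} [CommRing R] (J : Ideal R) (M : Type)
    [AddCommGroup M] [Module R M] : ℕ∞ :=
  sSup {c : ℕ∞ | ∃ rs : List R, (rs.length : ℕ∞) = c ∧ (∀ r ∈ rs, r ∈ J) ∧
    RingTheory.Sequence.IsWeaklyRegular M rs}

/-- The (Krull) dimension of a module, i.e. the Krull dimension of its support. -/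
noncomputable def moduleDim (R : Type) [CommRing R] (M : Type) [AddCommGroup M] [Module R M] :
    WithBot ℕ∞ :=
  Order.krullDim (Module.support R M)

/-- A module over a polynomial ring is Cohen–Macaulay of dimension `i` if its depth with
respect to the irrelevant maximal ideal and its dimension both equal `i`. -/
def IsCMofDim (σ k : Type) [Field k] (M : Type) [AddCommGroup M]
    [Module (MvPolynomial σ k) M] (i : ℕ) : Prop :=
  moduleDepth (Ideal.span (Set.range (X : σ → MvPolynomial σ k))) M = (i : ℕ∞) ∧
    moduleDim (MvPolynomial σ k) M = (i : WithBot ℕ∞)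

/-- A module `M` over `S = k[x_s : s ∈ σ]` (with `n = #σ`) is sequentially Cohen–Macaulay
if for each `i`, `Ext_S^{n-i}(M, S)` is zero or Cohen–Macaulay of dimension `i`. -/
def IsSeqCM (σ k : Type) [Fintype σ] [Field k] (M : Type) [AddCommGroup M]
    [Module (MvPolynomial σ k) M] : Prop :=
  ∀ i : ℕ, i ≤ Fintype.card σ →
    Subsingleton (ExtMod (MvPolynomial σ k) M (Fintype.card σ - i)) ∨
      IsCMofDim σ k (ExtMod (MvPolynomial σ k) M (Fintype.card σ - i)) i

/-- A pretty clean filtration (Herzog–Popescu): a prime filtration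
`0 = M_0 ⊂ ⋯ ⊂ M_t = M` with `M_i/M_{i-1} ≅ R/p_i` such that `i < j` and `p_i ⊆ p_j`
imply `p_i = p_j`. -/
def HasPrettyCleanFiltration (R : Type) [CommRing R] (M : Type) [AddCommGroup M]
    [Module R M] : Prop :=
  ∃ (t : ℕ) (Mf : ℕ → Submodule R M) (p : ℕ → Ideal R),
    Mf 0 = ⊥ ∧ Mf t = ⊤ ∧ (∀ i, Mf i ≤ Mf (i + 1)) ∧
    (∀ i < t, (p i).IsPrime ∧
      Nonempty ((↥(Mf (i + 1)) ⧸ Submodule.comap (Mf (i + 1)).subtype (Mf i)) ≃ₗ[R] R ⧸ p i)) ∧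
    (∀ i j, i < j → j < t → p i ≤ p j → p i = p j)

/-- `β` is the table of graded Betti numbers of the homogeneous ideal `I`: there is a
minimal graded free resolution `⋯ → F_1 → F_0 → I → 0` with
`F_i = ⊕_j S(-j)^{β i j}`.  Minimality and gradedness are expressed through the matrix
entries of the differentials: the entry from a generator of shift `j'` to a generator of
shift `j` is homogeneous of degree `j' - j`, and vanishes unless `j' > j`. -/
def IsBettiTable {σ k : Type} [Field k] (I : Ideal (MvPolynomial σ k))
    (β : ℕ → ℕ → ℕ) : Prop :=
  ∃ (d : ∀ i : ℕ, ((Σ j : ℕ, Fin (β (i + 1) j)) →₀ MvPolynomial σ k) →ₗ[MvPolynomial σ k]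
        ((Σ j : ℕ, Fin (β i j)) →₀ MvPolynomial σ k))
    (ε : ((Σ j : ℕ, Fin (β 0 j)) →₀ MvPolynomial σ k) →ₗ[MvPolynomial σ k] MvPolynomial σ k),
    LinearMap.range ε = (I : Submodule (MvPolynomial σ k) (MvPolynomial σ k)) ∧
    (∀ b : Σ j : ℕ, Fin (β 0 j), (ε (Finsupp.single b 1)).IsHomogeneous b.1) ∧
    LinearMap.ker ε = LinearMap.range (d 0) ∧
    (∀ i, LinearMap.ker (d i) = LinearMap.range (d (i + 1))) ∧
    (∀ i (b : Σ j : ℕ, Fin (β (i + 1) j)) (c : Σ j : ℕ, Fin (β i j)),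
      (c.1 < b.1 → ((d i (Finsupp.single b 1)) c).IsHomogeneous (b.1 - c.1)) ∧
      (¬ c.1 < b.1 → (d i (Finsupp.single b 1)) c = 0))

end Pol

theorem MvPolynomial.isPrime_span_X_image {R σ : Type*} [CommRing R] [IsDomain R] (s : Set σ) :
    (Ideal.span (X '' s : Set (MvPolynomial σ R))).IsPrime := by
  classical
  let φ : MvPolynomial σ R →ₐ[R] MvPolynomial σ R := aeval fun x => if x ∈ s then 0 else X x
  have sub_mem : ∀ f, f - φ f ∈ Ideal.span (X '' s : Set (MvPolynomial σ R)) := by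
    intro f
    induction f using MvPolynomial.induction_on with
    | C a => simp
    | add f g hf hg => simpa [add_sub_add_comm] using add_mem hf hg
    | mul_X f x hf =>
      have hx : X x - φ (X x) ∈ Ideal.span (X '' s : Set (MvPolynomial σ R)) := by
        by_cases hxs : x ∈ s
        · simpa [φ, hxs] using Ideal.subset_span (Set.mem_image_of_mem X hxs)
        · simp [φ, hxs]
      rw [map_mul, show f * X x - φ f * φ (X x) = (f - φ f) * X x + φ f * (X x - φ (X x)) by ring]
      exact add_mem (Ideal.mul_mem_right _ _ hf) (Ideal.mul_mem_left _ _ hx)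
  have : Ideal.span (X '' s : Set (MvPolynomial σ R)) = RingHom.ker φ := by
    refine le_antisymm (Ideal.span_le.mpr ?_) fun f hf => ?_
    · rintro _ ⟨x, hx, rfl⟩
      simp [φ, hx]
    · simpa [(RingHom.mem_ker).mp hf] using sub_mem f
  rw [this]
  exact RingHom.ker_isPrime _

theorem associatedPrimes_quotient_finsetInf_subset {R ι : Type*} [CommRing R] {s : Finset ι}
    {Q : ι → Ideal R} (hQ : ∀ i ∈ s, (Q i).IsPrime) :
    associatedPrimes R (R ⧸ s.inf Q) ⊆ Q '' s := by
  classical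
  rintro p ⟨hp, x, hpx⟩
  obtain ⟨f, rfl⟩ := Ideal.Quotient.mk_surjective x
  have mem_iff : ∀ r, r ∈ p ↔ ∃ m, ∀ i ∈ s, r ^ m * f ∈ Q i := by
    intro r
    simp only [hpx, Ideal.mem_radical_iff, Submodule.mem_colon_singleton, Submodule.mem_bot,
      Algebra.smul_def, Ideal.Quotient.algebraMap_eq, ← map_mul, Ideal.Quotient.eq_zero_iff_mem,
      Submodule.mem_finsetInf]
  let t := s.filter fun i => f ∉ Q i
  have inf_le : t.inf Q ≤ p := by
    refine fun r hr => (mem_iff r).mpr ⟨1, fun i hi => ?_⟩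
    by_cases hf : f ∈ Q i
    · exact Ideal.mul_mem_left _ _ hf
    · rw [pow_one]
      exact Ideal.mul_mem_right _ _
        (Submodule.mem_finsetInf.mp hr i (Finset.mem_filter.mpr ⟨hi, hf⟩))
  obtain ⟨i, hi, hQp⟩ := hp.inf_le'.mp inf_le
  obtain ⟨his, hf⟩ := Finset.mem_filter.mp hi
  refine ⟨i, his, le_antisymm hQp fun r hr => ?_⟩
  obtain ⟨m, hm⟩ := (mem_iff r).mp hr
  exact (hQ i his).mem_of_pow_mem m (((hQ i his).mem_or_mem (hm i his)).resolve_right hf)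

theorem MvPolynomial.monomial_one_mem_span_X_image_iff {σ R : Type*} [CommSemiring R]
    [Nontrivial R] {s : Set σ} {a : σ →₀ ℕ} :
    monomial a (1 : R) ∈ Ideal.span (X '' s : Set (MvPolynomial σ R)) ↔ ∃ i ∈ s, a i ≠ 0 := by
  classical
  rw [mem_ideal_span_X_image, support_monomial, if_neg one_ne_zero]
  simp

theorem MvPolynomial.monomial_add_mem {σ R : Type*} [CommSemiring R] {I : Ideal (MvPolynomial σ R)}
    {a : σ →₀ ℕ} (ha : monomial a (1 : R) ∈ I) (b : σ →₀ ℕ) : monomial (a + b) (1 : R) ∈ I := by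
  rw [add_comm]
  simpa [monomial_mul] using I.mul_mem_left (monomial b 1) ha

namespace Pol

variable {n : ℕ}

theorem psum_zero (a : Fin n →₀ ℕ) : psum a 0 = 0 := by
  simp [psum]

theorem psum_succ (a : Fin n →₀ ℕ) {i : ℕ} (h : i < n) : psum a (i + 1) = psum a i + a ⟨i, h⟩ := by
  have : Finset.univ.filter (fun j : Fin n => (j : ℕ) < i + 1) =
      insert ⟨i, h⟩ (Finset.univ.filter fun j : Fin n => (j : ℕ) < i) := by
    ext j
    simp only [Finset.mem_filter, Finset.mem_univ, true_and, Finset.mem_insert, Fin.ext_iff]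
    omega
  rw [psum, this, Finset.sum_insert (by simp), add_comm, psum]

theorem psum_mono (a : Fin n →₀ ℕ) : Monotone (psum a) := fun _ _ h =>
  Finset.sum_le_sum_of_subset fun j => by simpa using fun hj => lt_of_lt_of_le hj h

theorem psum_le_degE (a : Fin n →₀ ℕ) (i : ℕ) : psum a i ≤ degE a := by
  rw [degE, Finsupp.sum_fintype _ _ fun _ => rfl]
  exact Finset.sum_le_sum_of_subset (Finset.filter_subset _ _)

theorem psum_add (a b : Fin n →₀ ℕ) (i : ℕ) : psum (a + b) i = psum a i + psum b i := by
  simp [psum, Finset.sum_add_distrib]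

theorem psum_sub {a b : Fin n →₀ ℕ} (h : b ≤ a) (i : ℕ) : psum (a - b) i = psum a i - psum b i := by
  have : psum b i ≤ psum a i := Finset.sum_le_sum fun j _ => h j
  rw [eq_tsub_iff_add_eq_of_le this, ← psum_add, tsub_add_cancel_of_le h]

theorem psum_single (j : Fin n) (e i : ℕ) :
    psum (Finsupp.single j e) i = if (j : ℕ) < i then e else 0 := by
  simp [psum, Finsupp.single_apply]

theorem eq_of_psum_eq {a b : Fin n →₀ ℕ} (h : ∀ i ≤ n, psum a i = psum b i) : a = b := by
  ext j
  have := h (j + 1) j.isLt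
  rw [psum_succ a j.isLt, psum_succ b j.isLt, h j j.isLt.le] at this
  simpa using this

noncomputable def ofPsum (g : ℕ → ℕ) : Fin n →₀ ℕ :=
  Finsupp.equivFunOnFinite.symm fun j => g (j + 1) - g j

theorem psum_ofPsum {g : ℕ → ℕ} (hg : Monotone g) (hg0 : g 0 = 0) {i : ℕ} (hi : i ≤ n) :
    psum (ofPsum (n := n) g) i = g i := by
  induction i with
  | zero => rw [psum_zero, hg0]
  | succ i ih =>
    rw [psum_succ _ hi, ih (by omega)]
    show g i + (g (i + 1) - g i) = g (i + 1)
    have : g i ≤ g (i + 1) := hg i.le_succ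
    omega

theorem exists_last_psum_lt {u b : Fin n →₀ ℕ} (hub : ∀ i ≤ n, psum u i ≤ psum b i)
    (hne : u ≠ b) :
    ∃ ρ, 0 < ρ ∧ ρ ≤ n ∧ psum u ρ < psum b ρ ∧ (ρ < n → psum u ρ < psum u (ρ + 1)) := by
  classical
  obtain ⟨i₀, hi₀, hi₀n⟩ : ∃ i ≤ n, psum u i < psum b i := by
    by_contra! h
    exact hne (eq_of_psum_eq fun i hi => le_antisymm (hub i hi) (h i hi))
  set ρ := Nat.findGreatest (fun i => psum u i < psum b i) n
  have hρ : psum u ρ < psum b ρ :=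
    Nat.findGreatest_spec (P := fun i => psum u i < psum b i) hi₀ hi₀n
  refine ⟨ρ, Nat.pos_of_ne_zero fun h => by simp [h, psum_zero] at hρ, Nat.findGreatest_le n, hρ,
    fun h => ?_⟩
  have : ¬psum u (ρ + 1) < psum b (ρ + 1) :=
    Nat.findGreatest_is_greatest (P := fun i => psum u i < psum b i) ρ.lt_succ_self h
  have : psum b ρ ≤ psum b (ρ + 1) := psum_mono b ρ.le_succ
  omega

variable {k : Type} [CommRing k] {I : Ideal (MvPolynomial (Fin n) k)}

theorem IsBorelFixed.exists_psum_eq_add_ite (hB : IsBorelFixed I) {u : Fin n →₀ ℕ}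
    (hu : monomial u 1 ∈ I) {ρ : ℕ} (hρ0 : 0 < ρ) (hρn : ρ ≤ n)
    (hρ : ρ < n → psum u ρ < psum u (ρ + 1)) :
    ∃ u', monomial u' 1 ∈ I ∧ ∀ i ≤ n, psum u' i = psum u i + if i = ρ then 1 else 0 := by
  rcases hρn.lt_or_eq with hρn | rfl
  · -- move one unit of exponent from `x_ρ` to `x_{ρ-1}`
    have hlj : (⟨ρ - 1, by omega⟩ : Fin n) < ⟨ρ, hρn⟩ := Fin.mk_lt_mk.mpr (by omega)
    have hu_ρ : u ⟨ρ, hρn⟩ ≠ 0 := by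
      have := hρ hρn
      rw [psum_succ u hρn] at this
      omega
    refine ⟨_, hB u hu _ _ hlj hu_ρ, fun i _ => ?_⟩
    have hle : Finsupp.single (⟨ρ, hρn⟩ : Fin n) 1 ≤ u + Finsupp.single ⟨ρ - 1, by omega⟩ 1 :=
      Finsupp.single_le_iff.mpr (le_add_right (Nat.one_le_iff_ne_zero.mpr hu_ρ))
    rw [psum_sub hle, psum_add, psum_single, psum_single, Fin.val_mk, Fin.val_mk]
    split_ifs <;> omega
  · refine ⟨_, monomial_add_mem hu (Finsupp.single ⟨ρ - 1, by omega⟩ 1), fun i hi => ?_⟩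
    rw [psum_add, psum_single, Fin.val_mk]
    split_ifs <;> omega

theorem IsBorelFixed.monomial_mem_of_psum_le (hB : IsBorelFixed I) {u b : Fin n →₀ ℕ}
    (hu : monomial u 1 ∈ I) (hub : ∀ i ≤ n, psum u i ≤ psum b i) : monomial b 1 ∈ I := by
  obtain ⟨N, hN⟩ : ∃ N, ∑ i ∈ Finset.range (n + 1), (psum b i - psum u i) = N := ⟨_, rfl⟩
  induction N generalizing u with
  | zero =>
    have : u = b := eq_of_psum_eq fun i hi => le_antisymm (hub i hi) <| by
      have := Finset.sum_eq_zero_iff.mp hN i (Finset.mem_range.mpr (by omega))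
      omega
    exact this ▸ hu
  | succ N ih =>
    -- raise `u` at the last index where its partial sum falls short of that of `b`
    obtain ⟨ρ, hρ0, hρn, hρ, hρ_succ⟩ := exists_last_psum_lt hub fun h => by simp [h] at hN
    obtain ⟨u', hu', hpsum⟩ := hB.exists_psum_eq_add_ite hu hρ0 hρn hρ_succ
    have hsub : ∀ i ∈ Finset.range (n + 1),
        psum b i - psum u' i = (psum b i - psum u i) - if i = ρ then 1 else 0 := fun i hi => by
      rw [hpsum i (Nat.lt_succ_iff.mp (Finset.mem_range.mp hi)), tsub_add_eq_tsub_tsub]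
    have hle : ∀ i ∈ Finset.range (n + 1), (if i = ρ then 1 else 0) ≤ psum b i - psum u i := by
      intro i _
      split_ifs with h
      · subst h; omega
      · omega
    refine ih hu' (fun i hi => ?_) ?_
    · rw [hpsum i hi]
      split_ifs with h
      · exact h ▸ hρ
      · simpa using hub i hi
    · rw [Finset.sum_congr rfl hsub, Finset.sum_tsub_distrib _ hle, hN, Finset.sum_ite_eq',
        if_pos (Finset.mem_range.mpr (by omega))]
      rfl

theorem boxExp_apply (d : ℕ) (a : Fin n →₀ ℕ) (p : Fin n × Fin d) :
    boxExp d a p = if psum a p.1 ≤ p.2 ∧ (p.2 : ℕ) < psum a (p.1 + 1) then 1 else 0 := by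
  classical
  simp [boxExp, Finsupp.finsetSum_apply, Finsupp.single_apply]

theorem boxExp_le_of_forall_ne_zero {d : ℕ} {a : Fin n →₀ ℕ} {μ : Fin n × Fin d →₀ ℕ}
    (h : ∀ p : Fin n × Fin d, psum a p.1 ≤ p.2 → (p.2 : ℕ) < psum a (p.1 + 1) → μ p ≠ 0) :
    boxExp d a ≤ μ := fun p => by
  rw [boxExp_apply]
  split_ifs with hp
  · exact Nat.one_le_iff_ne_zero.mpr (h p hp.1 hp.2)
  · exact Nat.zero_le _

theorem IsBorelFixed.exists_isMinGen_boxExp_le (hB : IsBorelFixed I) {b : Fin n →₀ ℕ}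
    (hb : monomial b 1 ∈ I) (d : ℕ) : ∃ a, IsMinGen I a ∧ boxExp d a ≤ boxExp d b := by
  classical
  -- `pre e` is the product of the first `e` variables of `x^b`, in index order
  let pre : ℕ → Fin n →₀ ℕ := fun e => ofPsum fun i => min (psum b i) e
  have psum_pre : ∀ e, ∀ i ≤ n, psum (pre e) i = min (psum b i) e := fun e i hi =>
    psum_ofPsum (fun _ _ h => min_le_min_right e (psum_mono b h)) (by simp [psum_zero]) hi
  have hex : ∃ e, monomial (pre e) 1 ∈ I := by
    refine ⟨degE b, ?_⟩
    convert hb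
    exact eq_of_psum_eq fun i hi => by rw [psum_pre _ i hi, min_eq_left (psum_le_degE b i)]
  refine ⟨pre (Nat.find hex), ⟨Nat.find_spec hex, fun v hv hmem => ?_⟩,
    boxExp_le_of_forall_ne_zero fun p h₁ h₂ => ?_⟩
  · have hv_lt : psum b v < Nat.find hex := by
      have := psum_succ (pre (Nat.find hex)) v.isLt
      rw [psum_pre _ (v + 1) v.isLt, psum_pre _ v v.isLt.le, Fin.eta] at this
      omega
    refine Nat.find_min hex (m := Nat.find hex - 1) (by omega) <|
      hB.monomial_mem_of_psum_le hmem fun i hi => ?_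
    have hle : Finsupp.single v 1 ≤ pre (Nat.find hex) :=
      Finsupp.single_le_iff.mpr (Nat.one_le_iff_ne_zero.mpr hv)
    rw [psum_sub hle, psum_pre _ i hi, psum_pre _ i hi, psum_single]
    split_ifs with hvi
    · omega
    · have := psum_mono b (show i ≤ v by omega)
      omega
  · rw [psum_pre _ _ p.1.isLt.le] at h₁
    rw [psum_pre _ (p.1 + 1) p.1.isLt] at h₂
    rw [boxExp_apply, if_pos (by omega)]
    exact one_ne_zero

section Staircase

variable {d : ℕ} (μ : Fin n × Fin d →₀ ℕ)

def IsFree (i t : ℕ) : Prop :=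
  ∀ p : Fin n × Fin d, (p.1 : ℕ) = i → (p.2 : ℕ) = t → μ p = 0

theorem isFree_of_le {i t : ℕ} (ht : d ≤ t) : IsFree μ i t := fun p _ hp => by
  have := p.2.isLt
  omega

noncomputable def stair : ℕ → ℕ
  | 0 => 0
  | i + 1 => sInf {t | stair i ≤ t ∧ IsFree μ i t}

theorem stair_succ_spec (i : ℕ) :
    stair μ i ≤ stair μ (i + 1) ∧ IsFree μ i (stair μ (i + 1)) :=
  Nat.sInf_mem (s := {t | stair μ i ≤ t ∧ IsFree μ i t})
    ⟨max (stair μ i) d, le_max_left _ _, isFree_of_le μ (le_max_right _ _)⟩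

theorem not_isFree_of_lt_stair {i t : ℕ} (h₁ : stair μ i ≤ t) (h₂ : t < stair μ (i + 1)) :
    ¬IsFree μ i t := fun h => Nat.notMem_of_lt_sInf h₂ ⟨h₁, h⟩

theorem stair_mono : Monotone (stair μ) :=
  monotone_nat_of_le_succ fun i => (stair_succ_spec μ i).1

theorem stair_le (i : ℕ) : stair μ i ≤ d := by
  induction i with
  | zero => exact Nat.zero_le d
  | succ i ih => exact Nat.sInf_le ⟨ih, isFree_of_le μ le_rfl⟩

theorem boxExp_ofPsum_stair_le : boxExp d (ofPsum (n := n) (stair μ)) ≤ μ := by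
  refine boxExp_le_of_forall_ne_zero fun p h₁ h₂ hp => ?_
  rw [psum_ofPsum (stair_mono μ) rfl p.1.isLt.le] at h₁
  rw [psum_ofPsum (stair_mono μ) rfl (i := p.1 + 1) p.1.isLt] at h₂
  exact not_isFree_of_lt_stair μ h₁ h₂ fun q hq₁ hq₂ => by
    rwa [show q = p from Prod.ext (Fin.ext hq₁) (Fin.ext hq₂)]

theorem psum_le_stair {a : Fin n →₀ ℕ} (hda : degE a ≤ d)
    (hmiss : ∀ (i : Fin n) (h : stair μ (i + 1) < d), boxExp d a (i, ⟨_, h⟩) = 0) :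
    ∀ i ≤ n, psum a i ≤ stair μ i := by
  intro i hi
  induction i with
  | zero => simp [psum_zero]
  | succ i ih =>
    have h₁ := (ih (by omega)).trans (stair_mono μ i.le_succ)
    by_contra! hlt
    have hcell : stair μ (i + 1) < d := hlt.trans_le ((psum_le_degE a _).trans hda)
    have := hmiss ⟨i, hi⟩ hcell
    rw [boxExp_apply, if_pos ⟨h₁, hlt⟩] at this
    exact one_ne_zero this

end Staircase

/-- A chain `c_1 ≤ ⋯ ≤ c_m` is recorded on all `n` rows, with `c i = d` on the rows beyond `m`. -/
def chainCells {d : ℕ} (c : Fin n → Fin (d + 1)) : Set (Fin n × Fin d) :=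
  {p | (p.2 : ℕ) = c p.1}

theorem IsBorelFixed.exists_chain_separating (hB : IsBorelFixed I) {d : ℕ}
    (hd : ∀ a, IsMinGen I a → degE a ≤ d) {μ : Fin n × Fin d →₀ ℕ}
    (hμ : ∀ a, IsMinGen I a → ¬boxExp d a ≤ μ) :
    ∃ c : Fin n → Fin (d + 1), Monotone c ∧ (∀ p ∈ chainCells c, μ p = 0) ∧
      ∀ a, IsMinGen I a → ∃ p ∈ chainCells c, boxExp d a p ≠ 0 := by
  refine ⟨fun i => ⟨stair μ (i + 1), Nat.lt_succ_of_le (stair_le μ _)⟩,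
    fun i j h => stair_mono μ (Nat.succ_le_succ h), fun p hp => ?_, fun a ha => ?_⟩
  · exact (stair_succ_spec μ p.1).2 p rfl hp
  · by_contra! hmiss
    have hmem : monomial (ofPsum (n := n) (stair μ)) 1 ∈ I :=
      hB.monomial_mem_of_psum_le ha.1 fun i hi => by
        rw [psum_ofPsum (stair_mono μ) rfl hi]
        exact psum_le_stair μ (hd a ha) (fun i h => hmiss _ rfl) i hi
    obtain ⟨a', ha', hle⟩ := hB.exists_isMinGen_boxExp_le hmem d
    exact hμ a' ha' (hle.trans (boxExp_ofPsum_stair_le μ))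

noncomputable def chainIdeal (k : Type) [CommRing k] {d : ℕ} (c : Fin n → Fin (d + 1)) :
    Ideal (MvPolynomial (Fin n × Fin d) k) :=
  Ideal.span (X '' chainCells c)

theorem boxIdeal_le_iff {d : ℕ} {J : Ideal (MvPolynomial (Fin n × Fin d) k)} :
    boxIdeal d I ≤ J ↔ ∀ a, IsMinGen I a → monomial (boxExp d a) 1 ∈ J := by
  simp only [boxIdeal, Ideal.span_le, Set.subset_def, SetLike.mem_coe]
  exact ⟨fun h a ha => h _ ⟨a, ha, rfl⟩, fun h _ ⟨a, ha, hq⟩ => hq ▸ h a ha⟩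

theorem mem_boxIdeal_iff {d : ℕ} {r : MvPolynomial (Fin n × Fin d) k} :
    r ∈ boxIdeal d I ↔ ∀ μ ∈ r.support, ∃ a, IsMinGen I a ∧ boxExp d a ≤ μ := by
  have : {q | ∃ a, IsMinGen I a ∧ q = monomial (boxExp d a) (1 : k)} =
      (fun μ => monomial μ 1) '' (boxExp d '' {a | IsMinGen I a}) := by
    ext q
    simp [eq_comm]
  simp [boxIdeal, this, mem_ideal_span_monomial_image]

theorem IsBorelFixed.exists_boxIdeal_eq_inf_chainIdeal [Nontrivial k] (hB : IsBorelFixed I)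
    {d : ℕ} (hd : ∀ a, IsMinGen I a → degE a ≤ d) :
    ∃ s : Finset (Fin n → Fin (d + 1)), (∀ c ∈ s, Monotone c) ∧
      boxIdeal d I = s.inf (chainIdeal k) := by
  classical
  refine ⟨Finset.univ.filter fun c => Monotone c ∧ boxIdeal d I ≤ chainIdeal k c,
    fun c hc => (Finset.mem_filter.mp hc).2.1, ?_⟩
  refine le_antisymm (Finset.le_inf fun c hc => (Finset.mem_filter.mp hc).2.2) fun r hr => ?_
  refine mem_boxIdeal_iff.mpr fun μ hμ => ?_
  by_contra! hμ_notMem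
  obtain ⟨c, hc, hfree, hcover⟩ := hB.exists_chain_separating hd hμ_notMem
  have hle : boxIdeal d I ≤ chainIdeal k c := boxIdeal_le_iff.mpr fun a ha =>
    monomial_one_mem_span_X_image_iff.mpr (hcover a ha)
  obtain ⟨p, hp, hμp⟩ := mem_ideal_span_X_image.mp
    (Submodule.mem_finsetInf.mp hr c (by simp [hc, hle])) μ hμ
  exact hμp (hfree p hp)

theorem ass_box_quotient_form_general (n d : ℕ) (k : Type) [Field k]
    (I : Ideal (MvPolynomial (Fin n) k)) (hB : IsBorelFixed I)
    (hd : ∀ a : Fin n →₀ ℕ, IsMinGen I a → degE a ≤ d) :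
    ∀ p ∈ associatedPrimes (MvPolynomial (Fin n × Fin d) k) ((MvPolynomial (Fin n × Fin d) k) ⧸ boxIdeal d I),
      ∃ (m : ℕ) (c : ℕ → ℕ), m ≤ n ∧ (∀ i j : ℕ, i ≤ j → j < m → c i ≤ c j) ∧
        p = Ideal.span {q : MvPolynomial (Fin n × Fin d) k | ∃ (i : ℕ) (h1 : i < m) (h2 : i < n) (h3 : c i < d),
          q = X ((⟨i, h2⟩ : Fin n), (⟨c i, h3⟩ : Fin d))} := by
  intro p hp
  obtain ⟨s, hs, hJ⟩ := hB.exists_boxIdeal_eq_inf_chainIdeal (k := k) hd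
  rw [hJ] at hp
  obtain ⟨c, hc, rfl⟩ :=
    associatedPrimes_quotient_finsetInf_subset (fun c _ => isPrime_span_X_image _) hp
  refine ⟨n, fun i => if h : i < n then c ⟨i, h⟩ else 0, le_rfl, fun i j hij hj => ?_, ?_⟩
  · simp only [dif_pos (hij.trans_lt hj), dif_pos hj]
    exact hs c hc (Fin.mk_le_mk.mpr hij)
  · refine congrArg Ideal.span (Set.ext fun q => ⟨?_, ?_⟩)
    · rintro ⟨⟨i, j⟩, hij, rfl⟩
      have hj : (if h : (i : ℕ) < n then (c ⟨i, h⟩ : ℕ) else 0) = j := by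
        simpa [chainCells] using hij.symm
      exact ⟨i, i.isLt, i.isLt, by simp only [hj, j.isLt], by simp only [hj]⟩
    · rintro ⟨i, -, hi, hid, rfl⟩
      exact ⟨_, by simp [chainCells, hi], rfl⟩

/-- every associated prime of `Ŝ/B(I)` is of the form
`(x_{i,c_i} ∣ 1 ≤ i ≤ m)` with `c_1 ≤ ⋯ ≤ c_m`. -/
theorem ass_box_quotient_form (n d : ℕ) (k : Type) [Field k]
    (I : Ideal (MvPolynomial (Fin n) k)) (hmon : IsMonomialIdeal I) (hB : IsBorelFixed I)
    (hd : ∀ a : Fin n →₀ ℕ, IsMinGen I a → degE a ≤ d) :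
    ∀ p ∈ associatedPrimes (MvPolynomial (Fin n × Fin d) k) ((MvPolynomial (Fin n × Fin d) k) ⧸ boxIdeal d I),
      ∃ (m : ℕ) (c : ℕ → ℕ), m ≤ n ∧ (∀ i j : ℕ, i ≤ j → j < m → c i ≤ c j) ∧
        p = Ideal.span {q : MvPolynomial (Fin n × Fin d) k | ∃ (i : ℕ) (h1 : i < m) (h2 : i < n) (h3 : c i < d),
          q = X ((⟨i, h2⟩ : Fin n), (⟨c i, h3⟩ : Fin d))} :=
  ass_box_quotient_form_general n d k I hB hd

end Pol
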